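/- arXiv:1105.3649 — 7 statements merged into one kernel-verified Lean document; each statement's English description precedes it below -/
import Mathlib

section
/- Let G be a group with trivial center and let N be a finite normal subgroup of G. If there exists a finite subset F₁ of G/N with centralizer c_{G/N}(F₁) trivial, then there exists a finite subset F of G with centralizer c_G(F) trivial. -/
theorem stmt2 (G : Type*) [Group G] (hZ : Subgroup.center G = ⊥)
    (N : Subgroup G) [N.Normal] [Finite N]
    (h : ∃ F₁ : Finset (G ⧸ N), Subgroup.centralizer (F₁ : Set (G ⧸ N)) = ⊥) :
    ∃ F : Finset G, Subgroup.centralizer (F : Set G) = ⊥ := by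
  obtain ⟨F₁, hF₁⟩ := h
  classical
  set f : G →* MulAut N := MulAut.conjNormal with hf
  haveI hAut : Finite (MulAut ↥N) :=
    Finite.of_injective (fun e => (e : ↥N → ↥N)) DFunLike.coe_injective
  have hQ : Finite (G ⧸ f.ker) :=
    Finite.of_equiv (MonoidHom.range f) (QuotientGroup.quotientKerEquivRange f).symm
  let F₀ : Finset G := F₁.image (fun q => q.out)
  let NF : Finset G := (Set.toFinite (N : Set G)).toFinset
  let T : Finset G :=
    (Set.finite_range (fun q : G ⧸ f.ker => q.out)).toFinset
  refine ⟨F₀ ∪ NF ∪ T, ?_⟩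
  rw [eq_bot_iff]
  intro g hg
  rw [Subgroup.mem_centralizer_iff] at hg
  have hg₀ : ∀ x ∈ F₀, x * g = g * x := fun x hx =>
    hg x (by simp [Finset.mem_union, hx])
  have hgN : ∀ x ∈ N, x * g = g * x := fun x hx =>
    hg x (by simp [Finset.mem_union, NF, hx])
  have hgT : ∀ x ∈ T, x * g = g * x := fun x hx =>
    hg x (by simp [Finset.mem_union, hx])
  -- image of g centralizes F₁, hence g ∈ N
  have hgmem : g ∈ N := by
    have hmem : (g : G ⧸ N) ∈ Subgroup.centralizer (F₁ : Set (G ⧸ N)) := by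
      rw [Subgroup.mem_centralizer_iff]
      intro q hq
      have hq' : q ∈ F₁ := by exact_mod_cast hq
      have hout : q.out ∈ F₀ := Finset.mem_image.2 ⟨q, hq', rfl⟩
      have := hg₀ _ hout
      calc q * (g : G ⧸ N) = ((q.out * g : G) : G ⧸ N) := by
            rw [QuotientGroup.mk_mul, QuotientGroup.out_eq']
        _ = ((g * q.out : G) : G ⧸ N) := by rw [this]
        _ = (g : G ⧸ N) * q := by rw [QuotientGroup.mk_mul, QuotientGroup.out_eq']
    rw [hF₁, Subgroup.mem_bot] at hmem
    exact (QuotientGroup.eq_one_iff g).1 hmem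
  -- g commutes with everything
  have hcen : g ∈ Subgroup.center G := by
    rw [Subgroup.mem_center_iff]
    intro x
    set q : G ⧸ f.ker := (x : G ⧸ f.ker) with hq
    set t : G := q.out with ht
    have htT : t ∈ T := by
      simp only [T, Set.Finite.mem_toFinset]
      exact ⟨q, rfl⟩
    have hmk : (t : G ⧸ f.ker) = (x : G ⧸ f.ker) := by
      rw [ht, hq, QuotientGroup.out_eq']
    have hker : t⁻¹ * x ∈ f.ker := by
      rwa [QuotientGroup.eq] at hmk
    set c : G := t⁻¹ * x with hc
    have hfc : f c = 1 := hker
    have hcg : c * g * c⁻¹ = g := by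
      have h1 : (f c) ⟨g, hgmem⟩ = ⟨g, hgmem⟩ := by rw [hfc]; rfl
      have h2 := congrArg (Subtype.val) h1
      simpa [hf, MulAut.conjNormal_apply] using h2
    have hx : x = t * c := by rw [hc]; group
    have htg : t * g = g * t := hgT t htT
    calc x * g = (t * c) * g := by rw [← hx]
      _ = t * (c * g * c⁻¹) * c := by group
      _ = t * g * c := by rw [hcg]
      _ = g * (t * c) := by rw [htg]; group
      _ = g * x := by rw [← hx]
  rw [hZ] at hcen
  exact hcen
end

section
/- Let G be a nontrivial abelian group with no elements of order 2. Let f : G → G be the inversion automorphism f(x) = -x, and let H = G ⋊ ⟨f⟩ be the corresponding semidirect product. Then there exists a finite subset F of H (namely F = {(g, id), (0, f)} for any g ∈ G \ {0}) with trivial centralizer c_H(F) = {e_H}, and G has index 2 in H. -/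
theorem stmt5 (G : Type*) [CommGroup G] [Nontrivial G]
    (h2 : ∀ x : G, x ^ 2 = 1 → x = 1) (g : G) (hg : g ≠ 1) :
    Subgroup.centralizer
        ({SemidirectProduct.inl g,
          SemidirectProduct.inr ⟨(MulEquiv.inv G : MulAut G),
            Subgroup.mem_zpowers _⟩} :
          Set (G ⋊[(Subgroup.zpowers (MulEquiv.inv G : MulAut G)).subtype]
               (Subgroup.zpowers (MulEquiv.inv G : MulAut G)))) = ⊥ ∧
    (SemidirectProduct.inl :
        G →* G ⋊[(Subgroup.zpowers (MulEquiv.inv G : MulAut G)).subtype]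
              (Subgroup.zpowers (MulEquiv.inv G : MulAut G))).range.index = 2 := by
  set f : MulAut G := (MulEquiv.inv G : MulAut G)
  have hfsq : f * f = 1 := by
    ext x
    simp [f]
  have hfne : f ≠ 1 := by
    intro h
    apply hg
    apply h2
    have : f g = g := by rw [h]; rfl
    simp only [f, MulEquiv.inv_apply, MulAut.one_apply] at this
    rw [pow_two]
    nth_rewrite 1 [← this]
    exact inv_mul_cancel g
  constructor
  · ext h
    simp only [Subgroup.mem_bot, Subgroup.mem_centralizer_iff, Set.mem_insert_iff,
      Set.mem_singleton_iff, forall_eq_or_imp, forall_eq]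
    constructor
    · rintro ⟨h1, h2'⟩
      -- from commuting with inr f : h.left⁻¹ = h.left
      have hl : h.left = 1 := by
        have := congrArg SemidirectProduct.left h2'
        simp only [SemidirectProduct.mul_left, SemidirectProduct.left_inr, map_one,
          SemidirectProduct.right_inr, mul_one] at this
        -- this : φ ⟨f,_⟩ h.left = h.left * 1 or similar
        simp only [Subgroup.coe_subtype, f, MulEquiv.inv_apply] at this
        apply h2
        rw [pow_two]
        rw [one_mul] at this
        nth_rewrite 1 [← this]
        exact inv_mul_cancel _
      -- from commuting with inl g : h.right g = g
      have hr : h.right = 1 := by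
        have := congrArg SemidirectProduct.left h1
        simp only [SemidirectProduct.mul_left, SemidirectProduct.left_inl,
          SemidirectProduct.right_inl, map_one, mul_one, hl, one_mul] at this
        obtain ⟨k, hk⟩ := h.right.2
        beta_reduce at hk
        have h21 : f ^ (2 : ℤ) = 1 := by
          rw [show (2:ℤ) = ((2:ℕ):ℤ) from rfl, zpow_natCast, pow_two, hfsq]
        have hfk : f ^ k = 1 ∨ f ^ k = f := by
          rcases Int.even_or_odd k with ⟨m, hm⟩ | ⟨m, hm⟩
          · left
            rw [hm, ← two_mul, zpow_mul, h21, one_zpow]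
          · right
            rw [hm, zpow_add, zpow_mul, h21, one_zpow, one_mul, zpow_one]
        rcases hfk with hc | hc
        · exact Subtype.ext (hk.symm.trans hc)
        · exfalso
          apply hg
          apply h2
          rw [Subgroup.coe_subtype, ← hk] at this
          rw [hc] at this
          simp only [f, MulEquiv.inv_apply] at this
          rw [pow_two]
          nth_rewrite 2 [this]
          exact mul_inv_cancel g
      exact SemidirectProduct.ext hl hr
    · rintro rfl
      simp
  · rw [SemidirectProduct.range_inl_eq_ker_rightHom, Subgroup.index_ker]
    have hsurj : (SemidirectProduct.rightHom :
        G ⋊[(Subgroup.zpowers f).subtype] (Subgroup.zpowers f) →* _).range = ⊤ :=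
      MonoidHom.range_eq_top_of_surjective _ SemidirectProduct.rightHom_surjective
    rw [hsurj]
    rw [Nat.card_congr Subgroup.topEquiv.toEquiv, Nat.card_zpowers]
    exact orderOf_eq_prime (by rw [pow_two]; exact hfsq) hfne
end

section
/- Let G be an abelian group and let f be an automorphism of G such that for every nonzero integer n, the automorphism fⁿ has no nonzero fixed point. Then the semidirect product H = G ⋊ ⟨f⟩ admits a finite subset with trivial centralizer: for any g ∈ G \ {0}, the set F = {(g, id), (0, f)} satisfies c_H(F) = {e_H}. -/
theorem stmt6 (G : Type*) [CommGroup G] (f : MulAut G)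
    (hf : ∀ n : ℤ, n ≠ 0 → ∀ x : G, (f ^ n) x = x → x = 1)
    (g : G) (hg : g ≠ 1) :
    Subgroup.centralizer
      ({SemidirectProduct.inl g,
        SemidirectProduct.inr ⟨f, Subgroup.mem_zpowers f⟩} :
        Set (G ⋊[(Subgroup.zpowers f).subtype] (Subgroup.zpowers f))) = ⊥ := by
  rw [Subgroup.eq_bot_iff_forall]
  intro x hx
  rw [Subgroup.mem_centralizer_iff] at hx
  have h1 := hx (SemidirectProduct.inl g) (Or.inl rfl)
  have h2 := hx (SemidirectProduct.inr ⟨f, Subgroup.mem_zpowers f⟩) (Or.inr rfl)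
  -- extract component equations
  have e1 : g * x.left = x.left * ((x.right : MulAut G) g) := by
    have := congrArg SemidirectProduct.left h1
    simpa using this
  have e2 : f x.left = x.left := by
    have := congrArg SemidirectProduct.left h2
    simpa using this
  have hxl : x.left = 1 := hf 1 one_ne_zero x.left (by simpa using e2)
  -- x.right fixes g
  have hfix : ((x.right : MulAut G) : G → G) g = g := by
    rw [hxl] at e1
    simpa using e1.symm
  obtain ⟨n, hn⟩ := x.right.2
  have hn' : f ^ n = (x.right : MulAut G) := hn
  have hn0 : n = 0 := by
    by_contra h
    exact hg (hf n h g (by rw [hn']; exact hfix))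
  have hxr : x.right = 1 := by
    ext : 1
    rw [← hn', hn0, zpow_zero]; rfl
  exact SemidirectProduct.ext hxl hxr
end

section
/- Let X be a set with |X| strictly greater than the cardinality of the continuum. Then for every finite subset F of the symmetric group S(X), the centralizer c_{S(X)}(F) is nontrivial, i.e., contains a permutation different from the identity. Consequently S(X) is not a Taĭmanov group. -/
/-!
Let `G` be the subgroup generated by `F`; it is countable, so its orbits on `X` are countable
and it has at most `𝔠` subgroups. Since `#X > 𝔠`, the map `x ↦ stabilizer G x` cannot have all its
fibres inside single orbits: there are `x`, `y` in different orbits with the same stabilizer.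
The orbits of `x` and `y` are then isomorphic `G`-sets via `g • x ↦ g • y`, and swapping them
along this isomorphism gives a nontrivial permutation commuting with `G`.
-/

open Cardinal MulAction

theorem Subgroup.countable_closure {G : Type*} [Group G] {s : Set G} (hs : s.Countable) :
    Countable (Subgroup.closure s) := by
  have := hs.to_subtype
  rw [← Subtype.range_coe (s := s), ← FreeGroup.range_lift_eq_closure]
  exact (FreeGroup.lift ((↑) : s → G)).rangeRestrict_surjective.countable

namespace MulAction

universe u v

variable {G : Type u} {X : Type v} [Group G] [MulAction G X]

theorem smul_eq_smul_of_stabilizer_le {x y : X} (h : stabilizer G x ≤ stabilizer G y) {g g' : G}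
    (hg : g • x = g' • x) : g • y = g' • y := by
  have hmem : g'⁻¹ * g ∈ stabilizer G y := h <| by
    rw [mem_stabilizer_iff, mul_smul, hg, inv_smul_smul]
  rwa [mem_stabilizer_iff, mul_smul, inv_smul_eq_iff] at hmem

open scoped Classical in
/-- Exchanges `g • x` with `g • y` and fixes all other points; this is well defined only when `x`
and `y` have the same stabilizer and lie in different orbits. -/
noncomputable def orbitSwap (G : Type u) [Group G] [MulAction G X] (x y z : X) : X :=
  if h : z ∈ orbit G x then (mem_orbit_iff.1 h).choose • y
  else if h : z ∈ orbit G y then (mem_orbit_iff.1 h).choose • x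
  else z

variable {x y : X}

theorem orbitSwap_smul_left (h : stabilizer G x ≤ stabilizer G y) (g : G) :
    orbitSwap G x y (g • x) = g • y := by
  have hg : g • x ∈ orbit G x := mem_orbit x g
  rw [orbitSwap, dif_pos hg]
  exact smul_eq_smul_of_stabilizer_le h (mem_orbit_iff.1 hg).choose_spec

theorem orbitSwap_smul_right (h : stabilizer G y ≤ stabilizer G x) (hy : y ∉ orbit G x) (g : G) :
    orbitSwap G x y (g • y) = g • x := by
  have hg : g • y ∈ orbit G y := mem_orbit y g
  have hg' : g • y ∉ orbit G x := fun hx => hy <| by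
    rwa [← orbit_eq_iff, orbit_smul, orbit_eq_iff] at hx
  rw [orbitSwap, dif_neg hg', dif_pos hg]
  exact smul_eq_smul_of_stabilizer_le h (mem_orbit_iff.1 hg).choose_spec

theorem orbitSwap_of_notMem {z : X} (hx : z ∉ orbit G x) (hy : z ∉ orbit G y) :
    orbitSwap G x y z = z := by
  rw [orbitSwap, dif_neg hx, dif_neg hy]

theorem orbitSwap_smul (hxy : stabilizer G x = stabilizer G y) (hy : y ∉ orbit G x) (g : G)
    (z : X) : orbitSwap G x y (g • z) = g • orbitSwap G x y z := by
  by_cases hzx : z ∈ orbit G x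
  · obtain ⟨h, rfl⟩ := mem_orbit_iff.1 hzx
    rw [smul_smul, orbitSwap_smul_left hxy.le, orbitSwap_smul_left hxy.le, smul_smul]
  by_cases hzy : z ∈ orbit G y
  · obtain ⟨h, rfl⟩ := mem_orbit_iff.1 hzy
    rw [smul_smul, orbitSwap_smul_right hxy.ge hy, orbitSwap_smul_right hxy.ge hy, smul_smul]
  rw [orbitSwap_of_notMem hzx hzy, orbitSwap_of_notMem]
  · rwa [← orbit_eq_iff, orbit_smul, orbit_eq_iff]
  · rwa [← orbit_eq_iff, orbit_smul, orbit_eq_iff]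

theorem orbitSwap_involutive (hxy : stabilizer G x = stabilizer G y) (hy : y ∉ orbit G x) :
    Function.Involutive (orbitSwap G x y) := by
  intro z
  by_cases hzx : z ∈ orbit G x
  · obtain ⟨h, rfl⟩ := mem_orbit_iff.1 hzx
    rw [orbitSwap_smul_left hxy.le, orbitSwap_smul_right hxy.ge hy]
  by_cases hzy : z ∈ orbit G y
  · obtain ⟨h, rfl⟩ := mem_orbit_iff.1 hzy
    rw [orbitSwap_smul_right hxy.ge hy, orbitSwap_smul_left hxy.le]
  rw [orbitSwap_of_notMem hzx hzy, orbitSwap_of_notMem hzx hzy]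

theorem exists_stabilizer_eq_and_notMem_orbit [Countable G] (hX : 𝔠 < #X) :
    ∃ x y : X, stabilizer G x = stabilizer G y ∧ y ∉ orbit G x := by
  by_contra! h
  have hfiber : ∀ H : Subgroup G, lift.{u} #(stabilizer G ⁻¹' {H} : Set X) ≤ ℵ₀ := by
    intro H
    rcases Set.eq_empty_or_nonempty (stabilizer G ⁻¹' {H} : Set X) with hH | ⟨x, hx⟩
    · simp [hH]
    rw [lift_le_aleph0, mk_le_aleph0_iff]
    refine (Set.countable_range (· • x : G → X)).mono fun y hy => h x y ?_
    rw [Set.mem_preimage, Set.mem_singleton_iff] at hx hy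
    rw [hx, hy]
  have hsub : #(Subgroup G) ≤ 𝔠 := calc
    #(Subgroup G) ≤ #(Set G) := mk_le_of_injective SetLike.coe_injective
    _ = 2 ^ #G := mk_set
    _ ≤ 2 ^ ℵ₀ := power_le_power_left two_ne_zero mk_le_aleph0
    _ = 𝔠 := two_power_aleph0
  have : lift.{u} #X ≤ 𝔠 := calc
    lift.{u} #X ≤ lift.{v} #(Subgroup G) * ℵ₀ :=
      lift_mk_le_lift_mk_mul_of_lift_mk_preimage_le _ hfiber
    _ ≤ 𝔠 * ℵ₀ := by gcongr; exact lift_le_continuum.2 hsub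
    _ = 𝔠 := mul_aleph0_eq aleph0_le_continuum
  exact hX.not_ge (lift_le_continuum.1 this)

theorem exists_perm_ne_one_forall_smul_comm [Countable G] (hX : 𝔠 < #X) :
    ∃ π : Equiv.Perm X, π ≠ 1 ∧ ∀ (g : G) (z : X), π (g • z) = g • π z := by
  obtain ⟨x, y, hxy, hy⟩ := exists_stabilizer_eq_and_notMem_orbit (G := G) hX
  refine ⟨(orbitSwap_involutive hxy hy).toPerm, fun h => hy ?_, orbitSwap_smul hxy hy⟩
  have hswap : orbitSwap G x y x = y := by simpa using orbitSwap_smul_left hxy.le (1 : G)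
  rw [← hswap, ← Function.Involutive.coe_toPerm (orbitSwap_involutive hxy hy), h]
  exact mem_orbit_self x

end MulAction

theorem Equiv.Perm.exists_ne_one_mem_centralizer {X : Type*} {H : Subgroup (Equiv.Perm X)}
    [Countable H] (hX : 𝔠 < #X) : ∃ π : Equiv.Perm X, π ≠ 1 ∧ π ∈ Subgroup.centralizer H := by
  obtain ⟨π, hπ, hcomm⟩ := MulAction.exists_perm_ne_one_forall_smul_comm (G := H) hX
  refine ⟨π, hπ, fun σ hσ => Equiv.ext fun z => ?_⟩
  exact (hcomm ⟨σ, hσ⟩ z).symm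

theorem stmt9 (X : Type*) (hX : Cardinal.continuum < Cardinal.mk X) :
    ∀ F : Finset (Equiv.Perm X),
      ∃ π : Equiv.Perm X, π ≠ 1 ∧ π ∈ Subgroup.centralizer (F : Set (Equiv.Perm X)) := by
  intro F
  have := Subgroup.countable_closure F.countable_toSet
  rw [← Subgroup.centralizer_closure]
  exact Equiv.Perm.exists_ne_one_mem_centralizer hX
end

section
/- Let G be a topological group and N a normal subgroup of G. If the closure of {e} in N (with the subspace topology) is open in N, and the closure of {e_{G/N}} in G/N (with the quotient topology) is open in G/N, then the closure of {e_G} in G is open in G. In other words, the class of almost trivial topological groups has the three space property. -/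
/-!
The closure `K` of `{1}` in `G` is a subgroup, so it is open as soon as it is a neighbourhood
of `1`. Openness of `closure {1}` in `N` yields an open `U ∋ 1` with `U ∩ N ⊆ K`. Since the
quotient map is open, the preimage of `closure {1}` in `G ⧸ N` is `closure N`, which is therefore
open. Then `U ∩ closure N ⊆ closure (U ∩ N) ⊆ K` is an open neighbourhood of `1` inside `K`.
-/

open Set Topology

theorem isOpen_closure_one_iff_mem_nhds {G : Type*} [Group G] [TopologicalSpace G]
    [IsTopologicalGroup G] :
    IsOpen (closure ({1} : Set G)) ↔ closure ({1} : Set G) ∈ 𝓝 (1 : G) := by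
  refine ⟨fun h ↦ h.mem_nhds (subset_closure rfl), fun h ↦ ?_⟩
  rw [← Subgroup.coe_topologicalClosure_bot] at h ⊢
  exact Subgroup.isOpen_of_mem_nhds _ h

theorem Subgroup.exists_isOpen_inter_subset_closure_one {G : Type*} [Group G] [TopologicalSpace G]
    {H : Subgroup G} (hH : IsOpen (_root_.closure ({1} : Set H))) :
    ∃ U : Set G, IsOpen U ∧ 1 ∈ U ∧ U ∩ H ⊆ _root_.closure {1} := by
  obtain ⟨U, hU, hUH⟩ := isOpen_induced_iff.mp hH
  have hclosure : _root_.closure ({1} : Set H) = Subtype.val ⁻¹' _root_.closure {1} := by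
    rw [IsEmbedding.subtypeVal.closure_eq_preimage_closure_image, image_singleton]
    rfl
  rw [hclosure] at hUH
  refine ⟨U, hU, ?_, fun x ⟨hxU, hxH⟩ ↦ ?_⟩
  · exact (Set.ext_iff.mp hUH 1).mpr (_root_.subset_closure rfl)
  · exact (Set.ext_iff.mp hUH ⟨x, hxH⟩).mp hxU

theorem QuotientGroup.preimage_mk_closure_one {G : Type*} [Group G] [TopologicalSpace G]
    [IsTopologicalGroup G] (N : Subgroup G) [N.Normal] :
    (QuotientGroup.mk : G → G ⧸ N) ⁻¹' closure {1} = closure (N : Set G) := by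
  rw [(QuotientGroup.isOpenMap_coe (N := N)).preimage_closure_eq_closure_preimage
    continuous_quot_mk, ← QuotientGroup.mk_one, QuotientGroup.preimage_mk_one]

theorem stmt11 (G : Type*) [Group G] [TopologicalSpace G] [IsTopologicalGroup G]
    (N : Subgroup G) [N.Normal]
    (h1 : IsOpen (closure ({1} : Set N)))
    (h2 : IsOpen (closure ({1} : Set (G ⧸ N)))) :
    IsOpen (closure ({1} : Set G)) := by
  obtain ⟨U, hU, hU1, hUN⟩ := Subgroup.exists_isOpen_inter_subset_closure_one h1
  have hclosureN : IsOpen (closure (N : Set G)) := by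
    rw [← QuotientGroup.preimage_mk_closure_one]
    exact h2.preimage continuous_quot_mk
  rw [isOpen_closure_one_iff_mem_nhds]
  refine Filter.mem_of_superset
    ((hU.inter hclosureN).mem_nhds ⟨hU1, subset_closure N.one_mem⟩) ?_
  calc U ∩ closure N ⊆ closure (U ∩ N) := hU.inter_closure
    _ ⊆ closure (closure {1}) := closure_mono hUN
    _ = closure {1} := closure_closure
end

section
/- Let G be a topological group and D a normal subgroup of G such that D is discrete in the subspace topology and D is dense in G (equivalently, the quotient G/D is indiscrete). Then the closure N of {e_G} in G is an open subgroup of G, and G is topologically isomorphic to the product D × N where D carries the discrete topology and N the indiscrete topology. -/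
/-!
Since `D` is discrete there is an open `U` with `U ∩ D = {1}`, and density of `D` gives
`U ⊆ closure (U ∩ D) = N`; hence `N` is an open subgroup. In a topological group `N` is the set
of points inseparable from `1`, so `N` is indiscrete and meets the discrete `D` only in `1`.
The open, hence closed, subgroup `D ⊔ N` contains the dense `D`, so `G` is the internal direct
product of the normal subgroups `D` and `N`. The projection onto `D` is locally constant because
`N` is open, and the projection onto the indiscrete `N` is continuous for free.
-/

open Topology

namespace Subgroup

variable {G : Type*} [Group G]

section IsComplement'

variable {H K : Subgroup G}

theorem isComplement'_of_disjoint_of_sup_eq_top [K.Normal] (hdisj : Disjoint H K)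
    (hsup : H ⊔ K = ⊤) : IsComplement' H K :=
  isComplement'_of_disjoint_and_mul_eq_univ hdisj <| by rw [← mul_normal, hsup, coe_top]

theorem IsComplement'.isLocallyConstant_equiv_fst [TopologicalSpace G] [SeparatelyContinuousMul G]
    (h : IsComplement' H K) (hK : IsOpen (K : Set G)) :
    IsLocallyConstant fun g => (IsComplement.equiv h g).1 := by
  refine (IsLocallyConstant.iff_eventually_eq _).2 fun x => ?_
  have hxK : ∀ᶠ y in 𝓝 x, x⁻¹ * y ∈ K :=
    (continuous_const_mul x⁻¹).continuousAt.preimage_mem_nhds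
      (by simpa using hK.mem_nhds K.one_mem)
  filter_upwards [hxK] with y hy
  exact (IsComplement.equiv_fst_eq_iff_leftCosetEquivalence h).2
    ((leftCoset_eq_iff K).2 (by simpa using K.inv_mem hy))

variable [H.Normal] [K.Normal] (h : IsComplement' H K)

noncomputable def IsComplement'.prodMulEquiv : H × K ≃* G :=
  MulEquiv.ofBijective
    (MonoidHom.noncommCoprod H.subtype K.subtype fun x y =>
      commute_of_normal_of_disjoint H K ‹_› ‹_› h.disjoint x y x.2 y.2) h

theorem IsComplement'.coe_prodMulEquiv_symm : ⇑h.prodMulEquiv.symm = IsComplement.equiv h :=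
  rfl

variable [TopologicalSpace G]

theorem IsComplement'.continuous_prodMulEquiv [ContinuousMul G] : Continuous h.prodMulEquiv :=
  (continuous_subtype_val.comp continuous_fst).mul (continuous_subtype_val.comp continuous_snd)

theorem IsComplement'.continuous_prodMulEquiv_symm [SeparatelyContinuousMul G]
    [IndiscreteTopology K] (hK : IsOpen (K : Set G)) : Continuous h.prodMulEquiv.symm := by
  rw [h.coe_prodMulEquiv_symm]
  exact (h.isLocallyConstant_equiv_fst hK).continuous.prodMk continuous_of_indiscreteTopology

end IsComplement'

variable [TopologicalSpace G]

theorem sup_eq_top_of_dense_of_isOpen [SeparatelyContinuousMul G] {H K : Subgroup G}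
    (hH : Dense (H : Set G)) (hK : IsOpen (K : Set G)) : H ⊔ K = ⊤ := by
  have hclosed : IsClosed ((H ⊔ K : Subgroup G) : Set G) :=
    isClosed_of_isOpen _ (isOpen_mono le_sup_right hK)
  exact eq_top_iff.2 fun g _ =>
    hclosed.closure_subset_iff.2 (SetLike.coe_subset_coe.2 le_sup_left) (hH g)

variable [IsTopologicalGroup G]

theorem mem_topologicalClosure_bot_iff_inseparable {x : G} :
    x ∈ (⊥ : Subgroup G).topologicalClosure ↔ Inseparable x 1 := by
  rw [group_inseparable_iff, div_one, ← Set.singleton_one, ← coe_topologicalClosure_bot,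
    SetLike.mem_coe]

instance : IndiscreteTopology (⊥ : Subgroup G).topologicalClosure :=
  .of_forall_inseparable fun x y => IsInducing.subtypeVal.inseparable_iff.1 <|
    (mem_topologicalClosure_bot_iff_inseparable.1 x.2).trans
      (mem_topologicalClosure_bot_iff_inseparable.1 y.2).symm

theorem disjoint_topologicalClosure_bot (D : Subgroup G) [DiscreteTopology D] :
    Disjoint D (⊥ : Subgroup G).topologicalClosure := by
  refine disjoint_def.2 fun hxD hxN => ?_
  have hx : Inseparable (⟨_, hxD⟩ : D) 1 :=
    IsInducing.subtypeVal.inseparable_iff.1 (mem_topologicalClosure_bot_iff_inseparable.1 hxN)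
  exact congrArg Subtype.val hx.eq

theorem isOpen_topologicalClosure_bot_of_dense (D : Subgroup G) [DiscreteTopology D]
    (hD : Dense (D : Set G)) : IsOpen ((⊥ : Subgroup G).topologicalClosure : Set G) := by
  obtain ⟨U, hU, hUD⟩ := isOpen_induced_iff.1 (isOpen_discrete ({1} : Set D))
  have hU1 : U ∩ D = {1} := by
    rw [Set.inter_comm, ← Subtype.image_preimage_coe]
    change ((↑) : D → G) '' (((↑) : D → G) ⁻¹' U) = {1}
    rw [hUD, Set.image_singleton, coe_one]
  have h1U : (1 : G) ∈ U := (hU1.symm ▸ rfl : (1 : G) ∈ U ∩ D).1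
  refine isOpen_of_mem_nhds _ (Filter.mem_of_superset (hU.mem_nhds h1U) ?_)
  rw [coe_topologicalClosure_bot, ← hU1]
  exact hD.open_subset_closure_inter hU

end Subgroup

theorem stmt13 (G : Type*) [Group G] [TopologicalSpace G] [IsTopologicalGroup G]
    (D : Subgroup G) [D.Normal] [DiscreteTopology D] (hD : Dense (D : Set G)) :
    IsOpen (((⊥ : Subgroup G).topologicalClosure : Set G)) ∧
    (∀ U : Set ((⊥ : Subgroup G).topologicalClosure), IsOpen U → U = ∅ ∨ U = Set.univ) ∧
    ∃ e : G ≃* D × (⊥ : Subgroup G).topologicalClosure,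
      Continuous e ∧ Continuous e.symm := by
  have := Subgroup.is_normal_topologicalClosure (⊥ : Subgroup G)
  have hN := Subgroup.isOpen_topologicalClosure_bot_of_dense D hD
  have hDN : Subgroup.IsComplement' D (⊥ : Subgroup G).topologicalClosure :=
    Subgroup.isComplement'_of_disjoint_of_sup_eq_top (Subgroup.disjoint_topologicalClosure_bot D)
      (Subgroup.sup_eq_top_of_dense_of_isOpen hD hN)
  exact ⟨hN, fun U => (IndiscreteTopology.isOpen_iff U).1, hDN.prodMulEquiv.symm,
    hDN.continuous_prodMulEquiv_symm hN, hDN.continuous_prodMulEquiv⟩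
end

section
/- Let G be a group such that for every normal subgroup K of G, every Hausdorff group topology on the quotient G/K is discrete (i.e., G is totally Markov). Then for every group topology τ on G, the closure N_τ of {e_G} in (G, τ) is open; that is, every group topology on G is almost trivial. Conversely, if every group topology on G is almost trivial, then G is totally Markov. -/
/-!
If `G` is totally Markov and `τ` is a group topology on `G`, then `N = closure {1}` is a closed
normal subgroup, so `G ⧸ N` is a Hausdorff topological group, hence discrete; thus `N` is open.
Conversely, a Hausdorff group topology on `G ⧸ K` pulls back along the quotient map to a group
topology on `G` in which `closure {1} = K`. If that closure is open, `G ⧸ K` is discrete, because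
the quotient topology of the pulled-back topology is the original one.
-/

open Topology

def IsMarkov (G : Type*) [Group G] : Prop :=
  ∀ t : TopologicalSpace G, @IsTopologicalGroup G t _ → @T2Space G t → t = ⊥

def IsTotallyMarkov (G : Type*) [Group G] : Prop :=
  ∀ (K : Subgroup G) [K.Normal], IsMarkov (G ⧸ K)

theorem TopologicalSpace.coinduced_induced_of_surjective {α β : Type*} {f : α → β}
    (hf : Function.Surjective f) (t : TopologicalSpace β) : (t.induced f).coinduced f = t := by
  ext s
  refine ⟨fun hs => ?_, fun hs => ⟨s, hs, rfl⟩⟩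
  obtain ⟨u, hu, hus⟩ := isOpen_induced_iff.mp hs
  rwa [← hf.preimage_injective hus]

theorem MonoidHom.closure_one_induced_eq_ker {G H : Type*} [Group G] [Group H]
    [TopologicalSpace H] [T1Space H] (f : G →* H) :
    closure[‹TopologicalSpace H›.induced f] ({1} : Set G) = f.ker := by
  let := ‹TopologicalSpace H›.induced f
  rw [(IsInducing.induced f).closure_eq_preimage_closure_image, Set.image_singleton,
    map_one, closure_singleton]
  rfl

theorem IsTotallyMarkov.isOpen_closure_one {G : Type*} [Group G] (hG : IsTotallyMarkov G)
    [TopologicalSpace G] [IsTopologicalGroup G] : IsOpen (closure ({1} : Set G)) := by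
  set N := (⊥ : Subgroup G).topologicalClosure
  have : N.Normal := Subgroup.is_normal_topologicalClosure ⊥
  have : IsClosed (N : Set G) := Subgroup.isClosed_topologicalClosure ⊥
  have : DiscreteTopology (G ⧸ N) := ⟨hG N _ inferInstance inferInstance⟩
  rw [← Subgroup.coe_topologicalClosure_bot]
  exact QuotientGroup.discreteTopology_iff.mp this

theorem isTotallyMarkov_of_forall_isOpen_closure_one {G : Type*} [Group G]
    (hG : ∀ t : TopologicalSpace G, @IsTopologicalGroup G t _ → IsOpen[t] (closure[t] {1})) :
    IsTotallyMarkov G := by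
  intro K _ t _ _
  let tG : TopologicalSpace G := t.induced (QuotientGroup.mk' K)
  have : IsTopologicalGroup G := topologicalGroup_induced (QuotientGroup.mk' K)
  have hK : IsOpen (K : Set G) := by
    rw [← QuotientGroup.ker_mk' K, ← MonoidHom.closure_one_induced_eq_ker]
    exact hG tG this
  rw [← TopologicalSpace.coinduced_induced_of_surjective (QuotientGroup.mk'_surjective K) t]
  exact (QuotientGroup.discreteTopology_iff.mpr hK).eq_bot

theorem stmt14 (G : Type*) [Group G] :
    (∀ (K : Subgroup G) [K.Normal] (t : TopologicalSpace (G ⧸ K)),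
        @IsTopologicalGroup (G ⧸ K) t _ → @T2Space (G ⧸ K) t → t = ⊥) ↔
    (∀ t : TopologicalSpace G, @IsTopologicalGroup G t _ →
        @IsOpen G t (@closure G t {1})) :=
  ⟨fun hG _ _ => IsTotallyMarkov.isOpen_closure_one (G := G) hG,
    isTotallyMarkov_of_forall_isOpen_closure_one⟩
end
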